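/- The cylinder measures satisfy the reversal symmetry μ(j₁,j₂,...,jₙ) = μ(jₙ,jₙ₋₁,...,j₁) for every finite string (j₁,...,jₙ) ∈ {1,2}ⁿ. -/

import Mathlib

/-!
The defining recursion `μ(k₀k₁w) = a(k₀,k₁) μ(k₁w) + b(k₀,k₁) μ(w)` peels letters off the left end
of a string. Because `a` and `b` are symmetric, the same recursion also holds when letters are
peeled off the right end: this is checked by hand on strings of length two and three, and
propagates to longer strings by the left recursion. Reversal exchanges the two recursions, so
the symmetry follows by induction on the length.
-/

open Real

/-- β₁ = sin 2θ, β₂ = -sin 2θ (symbol 0 stands for "1", symbol 1 for "2"). -/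
noncomputable def beta (θ : ℝ) : Fin 2 → ℝ := ![sin (2 * θ), -sin (2 * θ)]

noncomputable def gamma (θ : ℝ) : ℝ := (1 - sin (2 * θ) ^ 2) / 4

/-- a(i,j) = 0 if i = j, 1 otherwise. -/
noncomputable def aCoef (i j : Fin 2) : ℝ := if i = j then 0 else 1

/-- b(i,j) = γ if i = j, -γ otherwise. -/
noncomputable def bCoef (θ : ℝ) (i j : Fin 2) : ℝ := if i = j then gamma θ else -gamma θ

/-- The cylinder measure μ on finite strings over {1,2}. -/
noncomputable def mu (θ : ℝ) : List (Fin 2) → ℝ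
  | [] => 1
  | [_] => 1 / 2
  | [i, j] => (1 - beta θ i * beta θ j) / 4
  | k0 :: k1 :: k2 :: rest =>
      aCoef k0 k1 * mu θ (k1 :: k2 :: rest) + bCoef θ k0 k1 * mu θ (k2 :: rest)

lemma mu_cons_cons (θ : ℝ) (k₀ k₁ : Fin 2) (w : List (Fin 2)) :
    mu θ (k₀ :: k₁ :: w) = aCoef k₀ k₁ * mu θ (k₁ :: w) + bCoef θ k₀ k₁ * mu θ w := by
  cases w with
  | nil => fin_cases k₀ <;> fin_cases k₁ <;> simp [mu, aCoef, bCoef, beta, gamma] <;> ring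
  | cons => rfl

lemma mu_append_pair (θ : ℝ) : ∀ (w : List (Fin 2)) (k₁ k₀ : Fin 2),
    mu θ (w ++ [k₁, k₀]) = aCoef k₀ k₁ * mu θ (w ++ [k₁]) + bCoef θ k₀ k₁ * mu θ w
  | [], k₁, k₀ => by
      fin_cases k₁ <;> fin_cases k₀ <;> simp [mu, aCoef, bCoef, beta, gamma] <;> ring
  | [v], k₁, k₀ => by
      fin_cases v <;> fin_cases k₁ <;> fin_cases k₀ <;>
        simp [mu, aCoef, bCoef, beta, gamma] <;> ring
  | u :: v :: w, k₁, k₀ => by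
      have h₁ := mu_append_pair θ (v :: w) k₁ k₀
      have h₂ := mu_append_pair θ w k₁ k₀
      simp only [List.cons_append] at h₁ h₂ ⊢
      rw [mu_cons_cons θ u v, h₁, h₂, mu_cons_cons θ u v (w ++ [k₁]), mu_cons_cons θ u v w]
      ring

/-- Reversal symmetry of the cylinder measures: μ(j₁,...,jₙ) = μ(jₙ,...,j₁). -/
theorem mu_reverse (θ : ℝ) (l : List (Fin 2)) : mu θ l = mu θ l.reverse := by
  match l with
  | [] | [_] => rfl
  | [i, j] => fin_cases i <;> fin_cases j <;> simp [mu, beta]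
  | k₀ :: k₁ :: k₂ :: w =>
      have hrev : (k₀ :: k₁ :: k₂ :: w).reverse = (k₂ :: w).reverse ++ [k₁, k₀] := by simp
      have hrev' : (k₂ :: w).reverse ++ [k₁] = (k₁ :: k₂ :: w).reverse := by simp
      rw [hrev, mu_append_pair, hrev', ← mu_reverse θ (k₁ :: k₂ :: w), ← mu_reverse θ (k₂ :: w),
        mu_cons_cons]
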